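/- arXiv:1009.2277 — 2 statements merged into one kernel-verified Lean document; each statement's English description precedes it below -/
import Mathlib

section
/- Let X be a compact metric space and f : X → X a multi-transitive continuous map. Then for any m ≥ 1 and nonempty open sets V₁, …, V_m ⊆ X there exists a sequence of integers (k_n)_{n=0}^∞ with k_n − n > 0 for each n ≥ 0, and for each i = 1, …, m a sequence (V_i^{(n)})_{n=0}^∞ of nonempty open subsets of V_i, such that f^{i·k_j − j}(V_i^{(n)}) ⊆ V_i for all i = 1, …, m and all 0 ≤ j ≤ n. -/
/-!
Multi-transitivity of `f` forces `f` to have dense range, so every preimage `f^{-r}(V)` of a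
nonempty open set is again nonempty and open. Transitivity of `f × f² × ⋯ × f^m` then sends the
product of the current sets `U_i` in time `t` into the product of the `f^{-i n}(V_i)`, so
`U_i ∩ f^{-((i+1)(t+n) - n)}(V_i)` is a nonempty open shrinking of `U_i` and `k_n = t + n` works.
Iterating this step produces a decreasing sequence of such sets, and a set in the sequence at
stage `n` inherits the property of every earlier stage `j ≤ n`.
-/

open Set Function

/-- A continuous self-map is topologically transitive if every pair of nonempty
open sets is connected by some positive iterate. -/
def TopTransitive {X : Type*} [TopologicalSpace X] (f : X → X) : Prop :=
  ∀ U V : Set X, IsOpen U → IsOpen V → U.Nonempty → V.Nonempty →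
    ∃ n : ℕ, 0 < n ∧ (f^[n] '' U ∩ V).Nonempty

/-- The map `f^{(∗m)} = f × f² × ⋯ × f^m` acting on `X^m` (coordinates indexed by `Fin m`,
where coordinate `i` is moved by `f^[i+1]`). -/
def starMap {X : Type*} (f : X → X) (m : ℕ) : (Fin m → X) → (Fin m → X) :=
  fun x i => f^[(i : ℕ) + 1] (x i)

/-- `f` is weakly mixing if `f × f` is topologically transitive. -/
def WeaklyMixing {X : Type*} [TopologicalSpace X] (f : X → X) : Prop :=
  TopTransitive (fun p : X × X => (f p.1, f p.2))

/-- `f` is multi-transitive if `f × f² × ⋯ × f^m` is topologically transitive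
for every `m ≥ 1`. -/
def MultiTransitive {X : Type*} [TopologicalSpace X] (f : X → X) : Prop :=
  ∀ m : ℕ, 1 ≤ m → TopTransitive (starMap f m)

/-- `f` is Δ-transitive if for each `m ≥ 1` there is a residual set `Y ⊆ X` such that
for every `x ∈ Y` the diagonal tuple `(x, …, x)` has dense orbit under `f × f² × ⋯ × f^m`. -/
def DeltaTransitive {X : Type*} [TopologicalSpace X] (f : X → X) : Prop :=
  ∀ m : ℕ, 1 ≤ m → ∃ Y : Set X, Y ∈ residual X ∧
    ∀ x ∈ Y, Dense (Set.range fun n : ℕ => (starMap f m)^[n] (fun _ : Fin m => x))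

/-- A set `S ⊆ ℕ` is syndetic if there is `L > 0` with `[n, n+L] ∩ S ≠ ∅` for every `n`. -/
def Syndetic (S : Set ℕ) : Prop :=
  ∃ L : ℕ, 0 < L ∧ ∀ n : ℕ, ∃ k ∈ S, n ≤ k ∧ k ≤ n + L

/-- `N(U,V;f) = {n > 0 : f^n(U) ∩ V ≠ ∅}`. -/
def NSet {X : Type*} (f : X → X) (U V : Set X) : Set ℕ :=
  {n | 0 < n ∧ (f^[n] '' U ∩ V).Nonempty}

/-- `f` is syndetically transitive if `N(U,V;f)` is syndetic for all nonempty open `U, V`. -/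
def SyndeticallyTransitive {X : Type*} [TopologicalSpace X] (f : X → X) : Prop :=
  ∀ U V : Set X, IsOpen U → IsOpen V → U.Nonempty → V.Nonempty → Syndetic (NSet f U V)

/-- `f` is strongly transitive if for every nonempty open `U` there is `M > 0` with
`⋃_{j=1}^M f^j(U) = X`. -/
def StronglyTransitive {X : Type*} [TopologicalSpace X] (f : X → X) : Prop :=
  ∀ U : Set X, IsOpen U → U.Nonempty →
    ∃ M : ℕ, 0 < M ∧ (⋃ j ∈ Finset.Icc 1 M, f^[j] '' U) = Set.univ

/-- `f` is minimal if the only nonempty closed `f`-invariant subset is the whole space. -/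
def MinimalMap {X : Type*} [TopologicalSpace X] (f : X → X) : Prop :=
  ∀ K : Set X, IsClosed K → K.Nonempty → f '' K ⊆ K → K = Set.univ

theorem starMap_iterate_apply {X : Type*} (f : X → X) (m t : ℕ) (x : Fin m → X) (i : Fin m) :
    (starMap f m)^[t] x i = f^[((i : ℕ) + 1) * t] (x i) := by
  induction t generalizing x with
  | zero => rfl
  | succ t ih => rw [iterate_succ_apply, ih, Nat.mul_succ, iterate_add_apply]; rfl

section

variable {X : Type*} [TopologicalSpace X] {f : X → X} {m : ℕ}

theorem TopTransitive.denseRange_of_starMap (hm : 0 < m) (h : TopTransitive (starMap f m)) :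
    DenseRange f := by
  let i : Fin m := ⟨0, hm⟩
  refine dense_iff_inter_open.2 fun U hU ⟨u, hu⟩ => ?_
  obtain ⟨t, ht, _, ⟨x, -, rfl⟩, hxU⟩ := h univ ((fun y => y i) ⁻¹' U) isOpen_univ
    (hU.preimage (continuous_apply i)) ⟨fun _ => u, trivial⟩ ⟨fun _ => u, hu⟩
  obtain ⟨s, rfl⟩ := Nat.exists_eq_add_of_lt ht
  refine ⟨_, hxU, f^[s] (x i), ?_⟩
  simp only [starMap_iterate_apply, i, zero_add, one_mul, iterate_succ_apply']

theorem DenseRange.iterate (hf : Continuous f) (hd : DenseRange f) (n : ℕ) :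
    DenseRange f^[n] := by
  induction n with
  | zero => exact denseRange_id
  | succ n ih => rw [iterate_succ']; exact hd.comp ih hf

theorem TopTransitive.exists_lt_subset_mapsTo (hf : Continuous f) (hd : DenseRange f)
    (h : TopTransitive (starMap f m)) {U V : Fin m → Set X}
    (hUo : ∀ i, IsOpen (U i)) (hUne : ∀ i, (U i).Nonempty)
    (hVo : ∀ i, IsOpen (V i)) (hVne : ∀ i, (V i).Nonempty) (n : ℕ) :
    ∃ k, n < k ∧ ∃ W : Fin m → Set X, ∀ i, IsOpen (W i) ∧ (W i).Nonempty ∧ W i ⊆ U i ∧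
      MapsTo f^[((i : ℕ) + 1) * k - n] (W i) (V i) := by
  set B : Fin m → Set X := fun i => f^[(i : ℕ) * n] ⁻¹' V i
  have hBo : ∀ i, IsOpen (B i) := fun i => (hVo i).preimage (hf.iterate _)
  have hBne : ∀ i, (B i).Nonempty := fun i => (hd.iterate hf _).exists_mem_open (hVo i) (hVne i)
  obtain ⟨t, ht, _, ⟨y, hyU, rfl⟩, hyB⟩ := h (univ.pi U) (univ.pi B)
    (isOpen_set_pi finite_univ fun i _ => hUo i) (isOpen_set_pi finite_univ fun i _ => hBo i)
    (univ_pi_nonempty_iff.2 hUne) (univ_pi_nonempty_iff.2 hBne)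
  have hexp : ∀ i : Fin m, ((i : ℕ) + 1) * (t + n) - n = (i : ℕ) * n + ((i : ℕ) + 1) * t :=
    fun i => by rw [Nat.sub_eq_of_eq_add]; ring
  refine ⟨t + n, by omega, fun i => U i ∩ f^[((i : ℕ) + 1) * (t + n) - n] ⁻¹' V i, fun i =>
    ⟨(hUo i).inter ((hVo i).preimage (hf.iterate _)), ⟨y i, hyU i trivial, ?_⟩,
      inter_subset_left, fun x hx => hx.2⟩⟩
  have := hyB i trivial
  rwa [mem_preimage, starMap_iterate_apply, ← iterate_add_apply, ← hexp] at this

theorem TopTransitive.exists_antitone_seq_mapsTo (hf : Continuous f) (hd : DenseRange f)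
    (h : TopTransitive (starMap f m)) {V : Fin m → Set X}
    (hVo : ∀ i, IsOpen (V i)) (hVne : ∀ i, (V i).Nonempty) :
    ∃ (k : ℕ → ℕ) (W : ℕ → Fin m → Set X), (∀ n, n < k n) ∧ Antitone W ∧ W 0 ≤ V ∧
      ∀ n i, IsOpen (W n i) ∧ (W n i).Nonempty ∧
        MapsTo f^[((i : ℕ) + 1) * k n - n] (W n i) (V i) := by
  have step := fun n (U : Fin m → Set X) (hU : (∀ i, IsOpen (U i)) ∧ ∀ i, (U i).Nonempty) =>
    h.exists_lt_subset_mapsTo hf hd hU.1 hU.2 hVo hVne n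
  choose! k hk W hW using step
  let T : ℕ → Fin m → Set X := fun n => Nat.rec V (fun n U => W n U) n
  have hT : ∀ n, (∀ i, IsOpen (T n i)) ∧ ∀ i, (T n i).Nonempty := by
    intro n
    induction n with
    | zero => exact ⟨hVo, hVne⟩
    | succ n ih => exact ⟨fun i => (hW n _ ih i).1, fun i => (hW n _ ih i).2.1⟩
  have hTanti : Antitone T := antitone_nat_of_succ_le fun n i => (hW n _ (hT n) i).2.2.1
  refine ⟨fun n => k n (T n), fun n => T (n + 1), fun n => hk n _ (hT n),
    hTanti.comp_monotone fun _ _ => Nat.succ_le_succ, hTanti (Nat.zero_le 1), fun n i => ?_⟩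
  obtain ⟨hWo, hWne, -, hWmaps⟩ := hW n _ (hT n) i
  exact ⟨hWo, hWne, hWmaps⟩

end

theorem statement2_general {X : Type*} [MetricSpace X] (f : X → X)
    (hf : Continuous f) (hmt : MultiTransitive f) :
    ∀ m : ℕ, 1 ≤ m → ∀ V : Fin m → Set X, (∀ i, IsOpen (V i)) → (∀ i, (V i).Nonempty) →
      ∃ (k : ℕ → ℕ) (W : Fin m → ℕ → Set X),
        (∀ n : ℕ, n < k n) ∧
        (∀ i n, IsOpen (W i n) ∧ (W i n).Nonempty ∧ W i n ⊆ V i) ∧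
        (∀ (i : Fin m) (n j : ℕ), j ≤ n →
          f^[((i : ℕ) + 1) * k j - j] '' W i n ⊆ V i) := by
  intro m hm V hVo hVne
  have htr := hmt m hm
  obtain ⟨k, W, hk, hanti, hW0, hW⟩ :=
    htr.exists_antitone_seq_mapsTo hf (htr.denseRange_of_starMap hm) hVo hVne
  refine ⟨k, fun i n => W n i, hk,
    fun i n => ⟨(hW n i).1, (hW n i).2.1, (hanti n.zero_le).trans hW0 i⟩, fun i n j hjn => ?_⟩
  exact ((hW j i).2.2.mono_left (hanti hjn i)).image_subset

/-- If `f` is multi-transitive, then for any `m ≥ 1` and nonempty open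
`V₁, …, V_m` there are integers `(k_n)` with `k_n - n > 0` and, for each `i`, nonempty open
subsets `V_i⁽ⁿ⁾ ⊆ V_i` with `f^{i·k_j - j}(V_i⁽ⁿ⁾) ⊆ V_i` for all `0 ≤ j ≤ n`. -/
theorem statement2 {X : Type*} [MetricSpace X] [CompactSpace X] (f : X → X)
    (hf : Continuous f) (hmt : MultiTransitive f) :
    ∀ m : ℕ, 1 ≤ m → ∀ V : Fin m → Set X, (∀ i, IsOpen (V i)) → (∀ i, (V i).Nonempty) →
      ∃ (k : ℕ → ℕ) (W : Fin m → ℕ → Set X),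
        (∀ n : ℕ, n < k n) ∧
        (∀ i n, IsOpen (W i n) ∧ (W i n).Nonempty ∧ W i n ⊆ V i) ∧
        (∀ (i : Fin m) (n j : ℕ), j ≤ n →
          f^[((i : ℕ) + 1) * k j - j] '' W i n ⊆ V i) :=
  statement2_general f hf hmt
end

section
/- Let m ≥ 2 and P = P(m) = ⋃_{k=1}^∞ {m^{2k−1}, m^{2k−1}+1, …, m^{2k}−1}. Then the map σ_P × σ_P^m : Σ_P × Σ_P → Σ_P × Σ_P is not topologically transitive; indeed, with U = V = [1]_P × [1]_P one has (σ_P × σ_P^m)^n(U) ∩ V = ∅ for every n ≥ 0. -/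
/-!
If both coordinates of a point of `Σ_P × Σ_P` start with `1` and so do both coordinates of its
`n`-th image under `σ_P × σ_P^m`, then `n ∈ P` and `m n ∈ P`. For `P = P(m)` this is impossible:
`n ∈ [m^{2k-1}, m^{2k})` forces `m n ∈ [m^{2k}, m^{2k+1})`, a gap of `P(m)`.
-/

open Set Function

/-- The spacing shift `Σ_P ⊆ {0,1}^ℕ`: all sequences such that whenever two distinct
positions carry the symbol `1`, the distance between them lies in `P`. -/
def SpacingSubshift (P : Set ℕ) : Set (ℕ → Bool) :=
  {x | ∀ i j : ℕ, i < j → x i = true → x j = true → j - i ∈ P}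

theorem shift_mem_spacingSubshift {P : Set ℕ} {x : ℕ → Bool}
    (hx : x ∈ SpacingSubshift P) : (fun n => x (n + 1)) ∈ SpacingSubshift P := by
  intro i j hij hi hj
  have h := hx (i + 1) (j + 1) (by omega) hi hj
  have : j + 1 - (i + 1) = j - i := by omega
  rwa [this] at h

/-- The shift map `σ_P : Σ_P → Σ_P` of the spacing shift. -/
def sigmaP (P : Set ℕ) : SpacingSubshift P → SpacingSubshift P :=
  fun x => ⟨fun n => x.1 (n + 1), shift_mem_spacingSubshift x.2⟩

/-- The cylinder `[1]_P` of points of `Σ_P` whose 0th coordinate is `1`. -/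
def oneCyl (P : Set ℕ) : Set (SpacingSubshift P) := {x | x.1 0 = true}

/-- A set `P ⊆ ℕ` is thick if it contains arbitrarily long intervals of
consecutive integers. -/
def Thick (P : Set ℕ) : Prop :=
  ∀ n : ℕ, ∃ k : ℕ, Set.Ico k (k + n) ⊆ P

/-- `P(m) = ⋃_{k ≥ 1} {m^{2k-1}, …, m^{2k} - 1}`. -/
def ProgressionSet (m : ℕ) : Set ℕ :=
  {n | ∃ k : ℕ, 1 ≤ k ∧ m ^ (2 * k - 1) ≤ n ∧ n < m ^ (2 * k)}

lemma sigmaP_iterate_apply (P : Set ℕ) (k : ℕ) (x : SpacingSubshift P) (j : ℕ) :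
    ((sigmaP P)^[k] x).1 j = x.1 (j + k) := by
  induction k generalizing x j with
  | zero => rfl
  | succ k ih => rw [iterate_succ_apply, ih]; rfl

lemma isOpen_oneCyl (P : Set ℕ) : IsOpen (oneCyl P) :=
  show IsOpen ((fun x : SpacingSubshift P => x.1 0) ⁻¹' {true}) from
  ((continuous_apply 0).comp continuous_subtype_val).isOpen_preimage _ (isOpen_discrete _)

lemma oneCyl_nonempty (P : Set ℕ) : (oneCyl P).Nonempty := by
  refine ⟨⟨fun n => decide (n = 0), fun i j hij hi hj => ?_⟩, rfl⟩
  simp only [decide_eq_true_eq] at hi hj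
  omega

lemma mem_of_mem_oneCyl_of_iterate_mem_oneCyl {P : Set ℕ} {x : SpacingSubshift P} {n : ℕ}
    (hn : 0 < n) (hx : x ∈ oneCyl P) (hxn : (sigmaP P)^[n] x ∈ oneCyl P) : n ∈ P := by
  have hxn' : x.1 n = true := by simpa [oneCyl, sigmaP_iterate_apply] using hxn
  simpa using x.2 0 n hn hx hxn'

lemma iterate_prodMap_image_oneCyl_inter_eq_empty {P : Set ℕ} {m : ℕ} (hm : 0 < m)
    (hP : ∀ n ∈ P, m * n ∉ P) {n : ℕ} (hn : 0 < n) :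
    (Prod.map (sigmaP P) (sigmaP P)^[m])^[n] '' (oneCyl P ×ˢ oneCyl P) ∩
      (oneCyl P ×ˢ oneCyl P) = ∅ := by
  rw [Set.eq_empty_iff_forall_notMem]
  rintro _ ⟨⟨x, ⟨hx₁, hx₂⟩, rfl⟩, hy₁, hy₂⟩
  simp only [Prod.map_iterate, Prod.map_fst, Prod.map_snd, ← iterate_mul] at hy₁ hy₂
  exact hP n (mem_of_mem_oneCyl_of_iterate_mem_oneCyl hn hx₁ hy₁)
    (mem_of_mem_oneCyl_of_iterate_mem_oneCyl (by positivity) hx₂ hy₂)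

lemma mul_notMem_progressionSet {m n : ℕ} (hm : 1 < m) (hn : n ∈ ProgressionSet m) :
    m * n ∉ ProgressionSet m := by
  obtain ⟨k, hk, hlo, hhi⟩ := hn
  rintro ⟨j, -, hlo', hhi'⟩
  have hmn_lo : m ^ (2 * k) ≤ m * n := by
    calc m ^ (2 * k) = m * m ^ (2 * k - 1) := by rw [← pow_succ']; congr 1; omega
      _ ≤ m * n := Nat.mul_le_mul_left m hlo
  have hmn_hi : m * n < m ^ (2 * k + 1) := by
    rw [pow_succ']
    exact Nat.mul_lt_mul_of_pos_left hhi (by omega)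
  have hjk : 2 * j - 1 < 2 * k + 1 := (Nat.pow_lt_pow_iff_right hm).mp (hlo'.trans_lt hmn_hi)
  have hkj : 2 * k < 2 * j := (Nat.pow_lt_pow_iff_right hm).mp (hmn_lo.trans_lt hhi')
  omega

lemma not_topTransitive_of_iterate_image_inter_eq_empty {X : Type*} [TopologicalSpace X]
    {f : X → X} {U V : Set X} (hU : IsOpen U) (hV : IsOpen V) (hU' : U.Nonempty)
    (hV' : V.Nonempty) (h : ∀ n, 1 ≤ n → f^[n] '' U ∩ V = ∅) : ¬ TopTransitive f := by
  intro hf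
  obtain ⟨n, hn, hne⟩ := hf U V hU hV hU' hV'
  exact hne.ne_empty (h n hn)

/-- For `m ≥ 2` and `P = P(m)`, the map `σ_P × σ_P^m` is not
topologically transitive; indeed, with `U = V = [1]_P × [1]_P` one has
`(σ_P × σ_P^m)^n(U) ∩ V = ∅` for every `n ≥ 1` (the positive iterates relevant
for transitivity). -/
theorem statement12 (m : ℕ) (hm : 2 ≤ m) :
    ¬ TopTransitive (fun p : SpacingSubshift (ProgressionSet m) × SpacingSubshift (ProgressionSet m) =>
        (sigmaP (ProgressionSet m) p.1, (sigmaP (ProgressionSet m))^[m] p.2)) ∧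
    ∀ n : ℕ, 1 ≤ n →
      (fun p : SpacingSubshift (ProgressionSet m) × SpacingSubshift (ProgressionSet m) =>
          (sigmaP (ProgressionSet m) p.1, (sigmaP (ProgressionSet m))^[m] p.2))^[n] ''
        (oneCyl (ProgressionSet m) ×ˢ oneCyl (ProgressionSet m)) ∩
        (oneCyl (ProgressionSet m) ×ˢ oneCyl (ProgressionSet m)) = ∅ := by
  have hdisjoint := fun n (hn : 1 ≤ n) =>
    iterate_prodMap_image_oneCyl_inter_eq_empty (P := ProgressionSet m) (by omega)
      (fun _ => mul_notMem_progressionSet hm) hn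
  have hU := (isOpen_oneCyl (ProgressionSet m)).prod (isOpen_oneCyl (ProgressionSet m))
  have hU' := (oneCyl_nonempty (ProgressionSet m)).prod (oneCyl_nonempty (ProgressionSet m))
  exact ⟨not_topTransitive_of_iterate_image_inter_eq_empty hU hU hU' hU' hdisjoint, hdisjoint⟩
end
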